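/- arXiv:2404.18688 — 5 statements merged into one kernel-verified Lean document; each statement's English description precedes it below -/
import Mathlib

section
/- Let K : ℝ → [0,∞) be a compactly supported, symmetric kernel with ∫ K(u) du = 1, ∫ u K(u) du = 0, and 0 < ∫ u² K(u) du < ∞. Let p be a continuously differentiable probability density and f : ℝ → ℝ twice continuously differentiable. Fix y ∈ ℝ and define, for h > 0, B(h) = (1/h) ∫ K((y − t)/h) (f(t) − f(y)) p(t) dt (which equals E[m̂₁(y)] for m̂₁(y) = (1/(nh)) Σ_i K((y − Y_i)/h)(f(Y_i) − f(y)) with Y_i i.i.d. of density p). Then lim_{h → 0⁺} B(h)/h² = (1/2) (2 f′(y) p′(y) + f″(y) p(y)) ∫ u² K(u) du. -/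
/-!
Substituting `t = y - h u` turns `B h` into `∫ K u * g (y - h u)` with `g = (f - f y) * p`.
Since `g y = 0`, `g' y = f' y * p y` and `g'' y = 2 f' y * p' y + f'' y * p y` (the last one only
needs `p ∈ C¹`, because `f - f y` vanishes at `y`), a second-order Peano expansion of `g` together
with `∫ u K = 0` gives `B h = h² g'' y / 2 * ∫ u² K + o(h²)`; the remainder is `o(h²)` uniformly
because `K` has compact support.
-/

open MeasureTheory Filter Asymptotics
open scoped Topology

section Integrability

variable {X R : Type*} [TopologicalSpace X] [T2Space X] [MeasurableSpace X] [OpensMeasurableSpace X]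
  {μ : Measure X} [NormedRing R] [SecondCountableTopologyEither X R] {g φ : X → R}

theorem MeasureTheory.Integrable.mul_continuous_of_hasCompactSupport (hg : Integrable g μ)
    (hcg : HasCompactSupport g) (hφ : Continuous φ) : Integrable (fun x => g x * φ x) μ :=
  (integrableOn_iff_integrable_of_support_subset
    ((Function.support_mul_subset_left _ _).trans (subset_tsupport g))).mp
    (hg.integrableOn.mul_continuousOn hφ.continuousOn hcg)

theorem MeasureTheory.Integrable.continuous_mul_of_hasCompactSupport (hg : Integrable g μ)
    (hcg : HasCompactSupport g) (hφ : Continuous φ) : Integrable (fun x => φ x * g x) μ :=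
  (integrableOn_iff_integrable_of_support_subset
    ((Function.support_mul_subset_right _ _).trans (subset_tsupport g))).mp
    (hg.integrableOn.continuousOn_mul hφ.continuousOn hcg)

end Integrability

theorem HasDerivAt.mul_continuousAt_of_eq_zero {𝕜 : Type*} [NontriviallyNormedField 𝕜]
    {A B : 𝕜 → 𝕜} {a x : 𝕜} (hA : HasDerivAt A a x) (hAx : A x = 0) (hB : ContinuousAt B x) :
    HasDerivAt (fun t => A t * B t) (a * B x) x := by
  rw [hasDerivAt_iff_tendsto_slope] at hA ⊢
  refine (hA.mul (hB.tendsto.mono_left nhdsWithin_le_nhds)).congr' ?_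
  filter_upwards [self_mem_nhdsWithin] with t ht
  simp only [slope_def_field, hAx, zero_mul, sub_zero]
  field_simp [sub_ne_zero.mpr ht]

theorem isLittleO_sq_of_hasDerivAt_isLittleO {E : Type*} [NormedAddCommGroup E] [NormedSpace ℝ E]
    {r R : ℝ → E} (hr : ∀ᶠ s in 𝓝 0, HasDerivAt r (R s) s) (hr0 : r 0 = 0)
    (hR : R =o[𝓝 0] fun s => s) : r =o[𝓝 0] fun s => s ^ 2 := by
  refine IsLittleO.of_bound fun ε hε => ?_
  obtain ⟨δ, hδ, hball⟩ := Metric.eventually_nhds_iff_ball.mp (hr.and (hR.bound hε))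
  filter_upwards [Metric.ball_mem_nhds 0 hδ] with s hs
  have hsub : Metric.closedBall (0 : ℝ) ‖s‖ ⊆ Metric.ball 0 δ :=
    Metric.closedBall_subset_ball (by simpa using hs)
  have hmvt := Convex.norm_image_sub_le_of_norm_hasDerivWithin_le (f := r) (x := 0) (y := s)
    (C := ε * ‖s‖)
    (fun t ht => (hball t (hsub ht)).1.hasDerivWithinAt)
    (fun t ht => (hball t (hsub ht)).2.trans (by gcongr; simpa using ht))
    (convex_closedBall 0 ‖s‖) (Metric.mem_closedBall_self (norm_nonneg s)) (by simp)
  simpa [hr0, pow_two, mul_assoc] using hmvt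

theorem isLittleO_sub_taylor_two {g G : ℝ → ℝ} {y G₂ : ℝ}
    (hg : ∀ᶠ t in 𝓝 y, HasDerivAt g (G t) t) (hG : HasDerivAt G G₂ y) :
    (fun s => g (y + s) - g y - G y * s - G₂ / 2 * s ^ 2) =o[𝓝 0] fun s => s ^ 2 := by
  refine isLittleO_sq_of_hasDerivAt_isLittleO (R := fun s => G (y + s) - G y - s * G₂) ?_
    (by simp) (by simpa using hasDerivAt_iff_isLittleO_nhds_zero.mp hG)
  have hshift : Tendsto (fun s => y + s) (𝓝 0) (𝓝 y) := by
    simpa using (continuous_const_add y).tendsto 0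
  filter_upwards [hshift.eventually hg] with s hs
  have := (((hs.comp_const_add y s).sub_const (g y)).sub ((hasDerivAt_id s).const_mul (G y))).sub
    ((hasDerivAt_pow 2 s).const_mul (G₂ / 2))
  exact this.congr_deriv (by norm_num; ring)

theorem isLittleO_integral_mul_comp_mul {K r : ℝ → ℝ} (hK : HasCompactSupport K)
    (hKi : Integrable K) (hr : r =o[𝓝 0] fun s => s ^ 2) :
    (fun h => ∫ u, K u * r (h * u)) =o[𝓝 0] fun h => h ^ 2 := by
  set C := ∫ u, u ^ 2 * ‖K u‖
  refine IsLittleO.of_bound fun ε hε => ?_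
  have hC : 0 ≤ C := integral_nonneg fun u => by positivity
  have hc : 0 < ε / (C + 1) := by positivity
  obtain ⟨δ, hδ, hrδ⟩ := Metric.eventually_nhds_iff_ball.mp (hr.bound hc)
  have hsmall : ∀ᶠ h in 𝓝 (0 : ℝ), ∀ u ∈ tsupport K, h * u ∈ Metric.ball 0 δ := by
    refine hK.isCompact.eventually_forall_of_forall_eventually fun u _ => ?_
    have hmul : Tendsto (fun z : ℝ × ℝ => z.1 * z.2) (𝓝 (0, u)) (𝓝 0) := by
      simpa using (continuous_mul (M := ℝ)).tendsto ((0 : ℝ), u)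
    exact hmul.eventually (Metric.ball_mem_nhds 0 hδ)
  filter_upwards [hsmall] with h hh
  have hbound : ∀ u, ‖K u * r (h * u)‖ ≤ ε / (C + 1) * h ^ 2 * (u ^ 2 * ‖K u‖) := by
    intro u
    by_cases hu : u ∈ tsupport K
    · calc ‖K u * r (h * u)‖ ≤ ‖K u‖ * (ε / (C + 1) * ‖(h * u) ^ 2‖) := by
            rw [norm_mul]; gcongr; exact hrδ _ (hh u hu)
        _ = ε / (C + 1) * h ^ 2 * (u ^ 2 * ‖K u‖) := by
            rw [norm_pow, norm_mul, mul_pow, Real.norm_eq_abs h, Real.norm_eq_abs u, sq_abs,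
              sq_abs]; ring
    · simp [image_eq_zero_of_notMem_tsupport hu]
  have hint : Integrable fun u => u ^ 2 * ‖K u‖ :=
    hKi.norm.continuous_mul_of_hasCompactSupport hK.norm (continuous_pow 2)
  calc ‖∫ u, K u * r (h * u)‖ ≤ ∫ u, ε / (C + 1) * h ^ 2 * (u ^ 2 * ‖K u‖) :=
        norm_integral_le_of_norm_le (hint.const_mul _) (Eventually.of_forall hbound)
    _ = ε * ‖h ^ 2‖ * (C / (C + 1)) := by
        rw [integral_const_mul, norm_pow, Real.norm_eq_abs, sq_abs]; ring
    _ ≤ ε * ‖h ^ 2‖ :=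
        mul_le_of_le_one_right (by positivity) ((div_le_one (by positivity)).mpr (by linarith))

theorem integral_comp_sub_div_mul (K φ : ℝ → ℝ) (y : ℝ) {h : ℝ} (hh : h ≠ 0) :
    ∫ t, K ((y - t) / h) * φ t = |h| * ∫ u, K u * φ (y - h * u) := by
  calc ∫ t, K ((y - t) / h) * φ t = ∫ t, K (t / h) * φ (y - t) := by
        simpa using integral_sub_left_eq_self (fun t => K (t / h) * φ (y - t)) volume y
    _ = ∫ t, K (t / h) * φ (y - h * (t / h)) := by
        simp only [mul_div_cancel₀ _ hh]
    _ = |h| * ∫ u, K u * φ (y - h * u) :=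
        Measure.integral_comp_div (fun u => K u * φ (y - h * u)) h

theorem integral_mul_comp_sub_eq_moments {K φ r : ℝ → ℝ} (hK : HasCompactSupport K)
    (hKi : Integrable K) (hr : Continuous r) {y a b : ℝ}
    (hφ : ∀ s, φ (y + s) = φ y + a * s + b * s ^ 2 + r s) (h : ℝ) :
    ∫ u, K u * φ (y - h * u)
      = φ y * (∫ u, K u) - a * h * (∫ u, u * K u) + b * h ^ 2 * (∫ u, u ^ 2 * K u)
        + ∫ u, K u * r (-(h * u)) := by
  have hpt : (fun u => K u * φ (y - h * u)) = fun u => φ y * K u - a * h * (u * K u)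
      + b * h ^ 2 * (u ^ 2 * K u) + K u * r (-(h * u)) := by
    funext u
    rw [sub_eq_add_neg, hφ]
    ring
  have hI0 : Integrable fun u => φ y * K u := hKi.const_mul _
  have hI1 : Integrable fun u => a * h * (u * K u) :=
    (hKi.continuous_mul_of_hasCompactSupport hK continuous_id).const_mul _
  have hI2 : Integrable fun u => b * h ^ 2 * (u ^ 2 * K u) :=
    (hKi.continuous_mul_of_hasCompactSupport hK (continuous_pow 2)).const_mul _
  have hIr : Integrable fun u => K u * r (-(h * u)) :=
    hKi.mul_continuous_of_hasCompactSupport hK (by fun_prop)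
  have hI01 : Integrable fun u => φ y * K u - a * h * (u * K u) := hI0.sub hI1
  have hI012 : Integrable fun u => φ y * K u - a * h * (u * K u) + b * h ^ 2 * (u ^ 2 * K u) :=
    hI01.add hI2
  rw [hpt, integral_add hI012 hIr, integral_add hI01 hI2, integral_sub hI0 hI1, integral_const_mul,
    integral_const_mul, integral_const_mul]

theorem tendsto_integral_kernel_comp_sub_div_sq {K φ : ℝ → ℝ} (hK : HasCompactSupport K)
    (hKi : Integrable K) (hφ : Continuous φ) {y a b : ℝ}
    (hφy : (fun s => φ (y + s) - φ y - a * s - b * s ^ 2) =o[𝓝 0] fun s => s ^ 2) :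
    Tendsto (fun h => ((∫ u, K u * φ (y - h * u)) - φ y * (∫ u, K u)
        + a * h * ∫ u, u * K u) / h ^ 2)
      (𝓝[≠] 0) (𝓝 (b * ∫ u, u ^ 2 * K u)) := by
  set r := fun s => φ (y + s) - φ y - a * s - b * s ^ 2
  have hr : (fun s => r (-s)) =o[𝓝 0] fun s => s ^ 2 := by
    have hneg : Tendsto Neg.neg (𝓝 (0 : ℝ)) (𝓝 0) := by simpa using tendsto_neg (0 : ℝ)
    simpa [Function.comp_def] using hφy.comp_tendsto hneg
  have hexpand := integral_mul_comp_sub_eq_moments (y := y) (a := a) (b := b) (r := r) hK hKi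
    (by simp only [r]; fun_prop) (fun s => by simp only [r]; ring)
  have hrem := (isLittleO_integral_mul_comp_mul hK hKi hr).tendsto_div_nhds_zero
  have hlim := (tendsto_const_nhds (x := b * ∫ u, u ^ 2 * K u)).add
    (hrem.mono_left (nhdsWithin_le_nhds (s := {0}ᶜ)))
  rw [add_zero] at hlim
  refine hlim.congr' ?_
  filter_upwards [self_mem_nhdsWithin] with h (hh : h ≠ 0)
  rw [hexpand]
  field_simp
  ring

theorem hasDerivAt_deriv_mul_add_sub_mul_deriv {f p : ℝ → ℝ} (hf : ContDiff ℝ 2 f)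
    (hp : ContDiff ℝ 1 p) (y : ℝ) :
    HasDerivAt (fun t => deriv f t * p t + (f t - f y) * deriv p t)
      (2 * deriv f y * deriv p y + deriv (deriv f) y * p y) y := by
  have hf' : Differentiable ℝ (deriv f) := (hf.deriv' (n := 1)).differentiable (by norm_num)
  have h1 := (hf' y).hasDerivAt.mul (hp.differentiable (by norm_num) y).hasDerivAt
  have h2 := ((hf.differentiable (by norm_num) y).hasDerivAt.sub_const (f y))
    |>.mul_continuousAt_of_eq_zero (sub_self _) (hp.continuous_deriv le_rfl).continuousAt
  exact (h1.add h2).congr_deriv (by ring)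

theorem stmt9_general
    (K : ℝ → ℝ)
    (hKsupp : HasCompactSupport K)
    (hK1 : ∫ u, K u = 1) (hKu : ∫ u, u * K u = 0)
    (p : ℝ → ℝ) (hp : ContDiff ℝ 1 p)
    (f : ℝ → ℝ) (hf : ContDiff ℝ 2 f)
    (y : ℝ) (B : ℝ → ℝ)
    (hB : ∀ h : ℝ, B h = (1 / h) * ∫ t, K ((y - t) / h) * (f t - f y) * p t) :
    Tendsto (fun h => B h / h ^ 2) (𝓝[>] 0)
      (𝓝 ((1 / 2) * (2 * deriv f y * deriv p y + deriv (deriv f) y * p y)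
        * ∫ u, u ^ 2 * K u)) := by
  set g : ℝ → ℝ := fun t => (f t - f y) * p t
  set G : ℝ → ℝ := fun t => deriv f t * p t + (f t - f y) * deriv p t
  have hg : ∀ t, HasDerivAt g (G t) t := fun t =>
    ((hf.differentiable (by norm_num) t).hasDerivAt.sub_const (f y)).mul
      (hp.differentiable (by norm_num) t).hasDerivAt
  have hlim := tendsto_integral_kernel_comp_sub_div_sq hKsupp
    (Integrable.of_integral_ne_zero (by simp [hK1]))
    (continuous_iff_continuousAt.2 fun t => (hg t).continuousAt)
    (isLittleO_sub_taylor_two (Eventually.of_forall hg)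
      (hasDerivAt_deriv_mul_add_sub_mul_deriv hf hp y))
  have hgy : g y = 0 := by simp [g]
  rw [hgy, hKu] at hlim
  simp only [zero_mul, sub_zero, mul_zero, add_zero] at hlim
  rw [show ∀ c q : ℝ, 1 / 2 * c * q = c / 2 * q by intros; ring]
  refine (hlim.mono_left (nhdsWithin_mono 0 fun h (hh : 0 < h) => hh.ne')).congr' ?_
  filter_upwards [self_mem_nhdsWithin] with h (hh : 0 < h)
  have hcv : ∫ t, K ((y - t) / h) * (f t - f y) * p t = h * ∫ u, K u * g (y - h * u) := by
    simpa only [mul_assoc, abs_of_pos hh] using integral_comp_sub_div_mul K g y hh.ne'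
  rw [hB, hcv]
  field_simp

/-- Second-order expansion of the bias term of the Nadaraya–Watson
estimator: for a compactly supported symmetric kernel `K` with `∫K = 1`, `∫uK = 0`,
`0 < ∫u²K < ∞`, a `C¹` density `p` and a `C²` regression function `f`,
`B(h) = (1/h)∫K((y−t)/h)(f(t) − f(y))p(t)dt` satisfies
`B(h)/h² → (1/2)(2f′(y)p′(y) + f″(y)p(y))∫u²K(u)du` as `h → 0⁺`. -/
theorem stmt9
    (K : ℝ → ℝ) (hKmeas : Measurable K) (hKnn : ∀ u, 0 ≤ K u)
    (hKsupp : HasCompactSupport K) (hKsymm : ∀ u, K (-u) = K u)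
    (hK1 : ∫ u, K u = 1) (hKu : ∫ u, u * K u = 0)
    (hKu2pos : 0 < ∫ u, u ^ 2 * K u)
    (p : ℝ → ℝ) (hp : ContDiff ℝ 1 p) (hpnn : ∀ t, 0 ≤ p t) (hp1 : ∫ t, p t = 1)
    (f : ℝ → ℝ) (hf : ContDiff ℝ 2 f)
    (y : ℝ) (B : ℝ → ℝ)
    (hB : ∀ h : ℝ, B h = (1 / h) * ∫ t, K ((y - t) / h) * (f t - f y) * p t) :
    Tendsto (fun h => B h / h ^ 2) (𝓝[>] 0)
      (𝓝 ((1 / 2) * (2 * deriv f y * deriv p y + deriv (deriv f) y * p y)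
        * ∫ u, u ^ 2 * K u)) :=
  stmt9_general K hKsupp hK1 hKu p hp f hf y B hB
end

section
/- Let Y_1, …, Y_n be i.i.d. real random variables with density p bounded by M, let f : ℝ → ℝ be Lipschitz with constant L, let K : ℝ → [0,∞) satisfy ∫ u² K²(u) du < ∞, fix y ∈ ℝ, h > 0, and define m̂₁(y) = (1/(nh)) Σ_{i=1}^n K((y − Y_i)/h)(f(Y_i) − f(y)). Then Var(m̂₁(y)) ≤ (L² M h / n) ∫ u² K²(u) du; in particular Var(m̂₁(y)) = O(h/n), which is negligible compared with the O(1/(nh)) variance of the noise term when h → 0. -/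
open MeasureTheory ProbabilityTheory
open scoped ENNReal NNReal

/-!
Write `m̂₁(y) = (nh)⁻¹ Σᵢ g(Yᵢ)` with `g t = K((y - t)/h)(f(t) - f(y))`. By independence the
variance is `(nh)⁻² Σᵢ Var g(Yᵢ) ≤ (nh)⁻² n E[g(Y)²]`. Lipschitz continuity gives
`g(t)² ≤ L²h² F((y - t)/h)` with `F(u) = u²K(u)²`, so bounding the density by `M` and substituting
`u = (y - t)/h` yields `E[g(Y)²] ≤ L²Mh³ ∫F`.
-/

section Density

variable {Ω α : Type*} [MeasurableSpace Ω] [MeasurableSpace α] {μ : Measure Ω} {ν : Measure α}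
  {X : Ω → α} {p : α → ℝ}

lemma integrable_comp_iff_integrable_density_mul (hX : Measurable X) (hp : Measurable p)
    (hpnn : ∀ t, 0 ≤ p t) (hlaw : μ.map X = ν.withDensity (fun t => ENNReal.ofReal (p t)))
    {φ : α → ℝ} (hφ : Measurable φ) :
    Integrable (φ ∘ X) μ ↔ Integrable (fun t => p t * φ t) ν := by
  rw [← integrable_map_measure hφ.aestronglyMeasurable hX.aemeasurable, hlaw,
    integrable_withDensity_iff_integrable_smul' hp.ennreal_ofReal
      (ae_of_all _ fun _ => ENNReal.ofReal_lt_top)]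
  simp only [ENNReal.toReal_ofReal (hpnn _), smul_eq_mul]

lemma integral_comp_eq_integral_density_mul (hX : Measurable X) (hp : Measurable p)
    (hpnn : ∀ t, 0 ≤ p t) (hlaw : μ.map X = ν.withDensity (fun t => ENNReal.ofReal (p t)))
    {φ : α → ℝ} (hφ : Measurable φ) :
    ∫ ω, φ (X ω) ∂μ = ∫ t, p t * φ t ∂ν := by
  rw [← integral_map hX.aemeasurable hφ.aestronglyMeasurable, hlaw,
    integral_withDensity_eq_integral_toReal_smul hp.ennreal_ofReal
      (ae_of_all _ fun _ => ENNReal.ofReal_lt_top)]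
  simp only [ENNReal.toReal_ofReal (hpnn _), smul_eq_mul]

end Density

lemma variance_smul_sum_le {Ω ι : Type*} [MeasurableSpace Ω] {μ : Measure Ω} [Fintype ι]
    {X : ι → Ω → ℝ} (hX : ∀ i, MemLp (X i) 2 μ) (hindep : Pairwise fun i j => X i ⟂ᵢ[μ] X j)
    {v : ℝ} (hv : ∀ i, variance (X i) μ ≤ v) (c : ℝ) :
    variance (c • ∑ i, X i) μ ≤ c ^ 2 * (Fintype.card ι * v) := by
  rw [variance_smul, IndepFun.variance_sum (fun i _ => hX i) fun i _ j _ hij => hindep hij]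
  gcongr
  calc ∑ i, variance (X i) μ ≤ ∑ _i : ι, v := Finset.sum_le_sum fun i _ => hv i
    _ = Fintype.card ι * v := by simp

section Kernel

lemma MeasureTheory.Integrable.comp_sub_div {F : ℝ → ℝ} (hF : Integrable F) (y : ℝ) {h : ℝ}
    (hh : h ≠ 0) :
    Integrable (fun t => F ((y - t) / h)) := by
  simpa using (hF.comp_div hh).comp_sub_left y

lemma integral_comp_sub_div (F : ℝ → ℝ) (y : ℝ) {h : ℝ} (hh : 0 < h) :
    ∫ t, F ((y - t) / h) = h * ∫ u, F u := by
  rw [integral_sub_left_eq_self (fun s => F (s / h)) volume y, Measure.integral_comp_div,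
    abs_of_pos hh, smul_eq_mul]

noncomputable def kernelBiasTerm (K f : ℝ → ℝ) (y h t : ℝ) : ℝ :=
  K ((y - t) / h) * (f t - f y)

variable {K f : ℝ → ℝ} {L : ℝ≥0} {y h : ℝ}

lemma measurable_kernelBiasTerm (hK : Measurable K) (hf : Continuous f) :
    Measurable (kernelBiasTerm K f y h) :=
  (hK.comp ((measurable_const.sub measurable_id).div_const h)).mul
    (hf.measurable.sub measurable_const)

lemma kernelBiasTerm_sq_le (hf : LipschitzWith L f) (hh : h ≠ 0) (t : ℝ) :
    kernelBiasTerm K f y h t ^ 2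
      ≤ (L : ℝ) ^ 2 * h ^ 2 * (((y - t) / h) ^ 2 * K ((y - t) / h) ^ 2) := by
  have hlip : (f t - f y) ^ 2 ≤ ((L : ℝ) * (y - t)) ^ 2 := by
    rw [← sq_abs, ← sq_abs ((L : ℝ) * _), abs_mul, NNReal.abs_eq, abs_sub_comm y]
    exact pow_le_pow_left₀ (abs_nonneg _) (by simpa [Real.dist_eq] using hf.dist_le_mul t y) 2
  calc kernelBiasTerm K f y h t ^ 2 = K ((y - t) / h) ^ 2 * (f t - f y) ^ 2 := by
        rw [kernelBiasTerm, mul_pow]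
    _ ≤ K ((y - t) / h) ^ 2 * ((L : ℝ) * (y - t)) ^ 2 := by gcongr
    _ = _ := by field_simp

variable {p : ℝ → ℝ} {M : ℝ}

lemma density_mul_kernelBiasTerm_sq_le (hf : LipschitzWith L f) (hh : h ≠ 0)
    (hpnn : ∀ t, 0 ≤ p t) (hpM : ∀ t, p t ≤ M) (t : ℝ) :
    p t * kernelBiasTerm K f y h t ^ 2
      ≤ (L : ℝ) ^ 2 * M * h ^ 2 * (((y - t) / h) ^ 2 * K ((y - t) / h) ^ 2) :=
  calc p t * kernelBiasTerm K f y h t ^ 2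
      ≤ M * ((L : ℝ) ^ 2 * h ^ 2 * (((y - t) / h) ^ 2 * K ((y - t) / h) ^ 2)) :=
        mul_le_mul (hpM t) (kernelBiasTerm_sq_le hf hh t) (sq_nonneg _)
          ((hpnn t).trans (hpM t))
    _ = _ := by ring

variable (hK : Measurable K) (hf : LipschitzWith L f) (hK2 : Integrable fun u => u ^ 2 * K u ^ 2)
  (hh : 0 < h) (hp : Measurable p) (hpnn : ∀ t, 0 ≤ p t) (hpM : ∀ t, p t ≤ M)
include hK hf hK2 hh hp hpnn hpM

lemma integrable_density_mul_kernelBiasTerm_sq :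
    Integrable fun t => p t * kernelBiasTerm K f y h t ^ 2 := by
  refine ((hK2.comp_sub_div y hh.ne').const_mul ((L : ℝ) ^ 2 * M * h ^ 2)).mono'
    (hp.mul ((measurable_kernelBiasTerm hK hf.continuous).pow_const 2)).aestronglyMeasurable
    (ae_of_all _ fun t => ?_)
  rw [Real.norm_of_nonneg (mul_nonneg (hpnn t) (sq_nonneg _))]
  exact density_mul_kernelBiasTerm_sq_le hf hh.ne' hpnn hpM t

lemma integral_density_mul_kernelBiasTerm_sq_le :
    ∫ t, p t * kernelBiasTerm K f y h t ^ 2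
      ≤ (L : ℝ) ^ 2 * M * h ^ 3 * ∫ u, u ^ 2 * K u ^ 2 :=
  calc ∫ t, p t * kernelBiasTerm K f y h t ^ 2
      ≤ ∫ t, (L : ℝ) ^ 2 * M * h ^ 2 * (((y - t) / h) ^ 2 * K ((y - t) / h) ^ 2) :=
        integral_mono (integrable_density_mul_kernelBiasTerm_sq hK hf hK2 hh hp hpnn hpM)
          ((hK2.comp_sub_div y hh.ne').const_mul _)
          (density_mul_kernelBiasTerm_sq_le hf hh.ne' hpnn hpM)
    _ = _ := by
        rw [integral_const_mul, integral_comp_sub_div (fun u => u ^ 2 * K u ^ 2) y hh]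
        ring

end Kernel

theorem stmt10_general
    {Ω : Type*} [MeasurableSpace Ω] {μ : Measure Ω} [IsProbabilityMeasure μ]
    (n : ℕ)
    (Y : Fin n → Ω → ℝ) (hYmeas : ∀ i, Measurable (Y i))
    (p : ℝ → ℝ) (hpnn : ∀ t, 0 ≤ p t) (hpmeas : Measurable p)
    (M : ℝ) (hpM : ∀ t, p t ≤ M)
    (hYlaw : ∀ i, μ.map (Y i) = volume.withDensity (fun t => ENNReal.ofReal (p t)))
    (hYindep : iIndepFun Y μ)
    (L : ℝ≥0) (f : ℝ → ℝ) (hf : LipschitzWith L f)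
    (K : ℝ → ℝ) (hKmeas : Measurable K)
    (hK2int : Integrable (fun u => u ^ 2 * K u ^ 2) volume)
    (y h : ℝ) (hh : 0 < h)
    (m1 : Ω → ℝ)
    (hm1 : m1 = fun ω => (1 / (n * h)) * ∑ i, K ((y - Y i ω) / h) * (f (Y i ω) - f y)) :
    variance m1 μ ≤ ((L : ℝ) ^ 2 * M * h / n) * ∫ u, u ^ 2 * K u ^ 2 := by
  set g := kernelBiasTerm K f y h
  have hg : Measurable g := measurable_kernelBiasTerm hKmeas hf.continuous
  have hg2 : Measurable fun t => g t ^ 2 := hg.pow_const 2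
  have hmem : ∀ i, MemLp (g ∘ Y i) 2 μ := fun i =>
    (memLp_two_iff_integrable_sq (hg.comp (hYmeas i)).aestronglyMeasurable).2 <|
      (integrable_comp_iff_integrable_density_mul (hYmeas i) hpmeas hpnn (hYlaw i) hg2).2 <|
        integrable_density_mul_kernelBiasTerm_sq hKmeas hf hK2int hh hpmeas hpnn hpM
  have hvar : ∀ i, variance (g ∘ Y i) μ
      ≤ (L : ℝ) ^ 2 * M * h ^ 3 * ∫ u, u ^ 2 * K u ^ 2 := fun i =>
    calc variance (g ∘ Y i) μ ≤ ∫ ω, (g ∘ Y i ^ 2) ω ∂μ :=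
          variance_le_expectation_sq (hg.comp (hYmeas i)).aestronglyMeasurable
      _ = ∫ t, p t * g t ^ 2 :=
          integral_comp_eq_integral_density_mul (hYmeas i) hpmeas hpnn (hYlaw i) hg2
      _ ≤ _ := integral_density_mul_kernelBiasTerm_sq_le hKmeas hf hK2int hh hpmeas hpnn hpM
  have hm1_eq : m1 = (1 / (n * h)) • ∑ i, g ∘ Y i := by
    ext ω
    simp [hm1, g, kernelBiasTerm]
  rw [hm1_eq]
  refine (variance_smul_sum_le hmem (fun i j hij => (hYindep.indepFun hij).comp hg hg)
    hvar _).trans_eq ?_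
  rcases eq_or_ne (n : ℝ) 0 with hn0 | hn0
  · simp [hn0]
  · rw [Fintype.card_fin]
    field_simp

/-- Variance of the bias term of the Nadaraya–Watson estimator:
if the `Yᵢ` are i.i.d. with density `p ≤ M`, `f` is `L`-Lipschitz and `∫u²K²(u)du < ∞`,
then `m̂₁(y) = (1/(nh)) Σᵢ K((y − Yᵢ)/h)(f(Yᵢ) − f(y))` satisfies
`Var(m̂₁(y)) ≤ (L²Mh/n) ∫u²K²(u)du`. -/
theorem stmt10
    {Ω : Type*} [MeasurableSpace Ω] {μ : Measure Ω} [IsProbabilityMeasure μ]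
    (n : ℕ) (hn : 0 < n)
    (Y : Fin n → Ω → ℝ) (hYmeas : ∀ i, Measurable (Y i))
    (p : ℝ → ℝ) (hpnn : ∀ t, 0 ≤ p t) (hpmeas : Measurable p)
    (M : ℝ) (hpM : ∀ t, p t ≤ M)
    (hYlaw : ∀ i, μ.map (Y i) = volume.withDensity (fun t => ENNReal.ofReal (p t)))
    (hYindep : iIndepFun Y μ)
    (L : ℝ≥0) (f : ℝ → ℝ) (hf : LipschitzWith L f)
    (K : ℝ → ℝ) (hKmeas : Measurable K) (hKnn : ∀ u, 0 ≤ K u)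
    (hK2int : Integrable (fun u => u ^ 2 * K u ^ 2) volume)
    (y h : ℝ) (hh : 0 < h)
    (m1 : Ω → ℝ)
    (hm1 : m1 = fun ω => (1 / (n * h)) * ∑ i, K ((y - Y i ω) / h) * (f (Y i ω) - f y)) :
    variance m1 μ ≤ ((L : ℝ) ^ 2 * M * h / n) * ∫ u, u ^ 2 * K u ^ 2 :=
  stmt10_general n Y hYmeas p hpnn hpmeas M hpM hYlaw hYindep L f hf K hKmeas hK2int y h hh m1 hm1
end

section
/- Let N_1, …, N_n be i.i.d. N(0, σ²) and Φ_1, …, Φ_n be i.i.d. N(0, σ_Φ²), all mutually independent, σ², σ_Φ² > 0, and set α = σ² / (σ² + σ_Φ²), A_i = N_i + Φ_i, B₁ = (α − 1)N_1 + αΦ_1 and D₁ = B₁². Then for all real coefficients c_1, …, c_n, E[(Σ_{i=1}^n c_i A_i)² · D₁] = E[(Σ_{i=1}^n c_i A_i)²] · E[D₁]. -/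
open MeasureTheory ProbabilityTheory
open scoped NNReal

/-!
Put `S = ∑ cᵢ Aᵢ` and `B₁ = (α - 1) N₁ + α Φ₁`. Both are linear forms in the independent
Gaussians `(Nᵢ, Φᵢ)`, hence jointly Gaussian, and their covariance is
`c₁ ((α - 1) σ² + α σ_Φ²) = 0` by the choice of `α`. Uncorrelated jointly Gaussian variables are
independent, so `S²` and `D₁ = B₁²` are independent and the expectation of their product splits.
-/

namespace ProbabilityTheory

variable {Ω ι : Type*} [MeasurableSpace Ω] {μ : Measure Ω} [Fintype ι] {X : ι → Ω → ℝ}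

lemma iIndepFun.covariance_fun_sum_mul_fun_sum (hind : iIndepFun X μ)
    (hX : ∀ i, MemLp (X i) 2 μ) (a b : ι → ℝ) :
    cov[fun ω ↦ ∑ i, a i * X i ω, fun ω ↦ ∑ i, b i * X i ω; μ]
      = ∑ i, a i * b i * Var[X i; μ] := by
  have := hind.isProbabilityMeasure
  rw [covariance_fun_sum_fun_sum (fun i ↦ (hX i).const_mul (a i))
    (fun i ↦ (hX i).const_mul (b i))]
  refine Finset.sum_congr rfl fun i _ ↦ ?_
  rw [Finset.sum_eq_single i ?_ (by simp), covariance_const_mul_left,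
    covariance_const_mul_right, covariance_self (hX i).aemeasurable, mul_assoc]
  intro j _ hji
  rw [covariance_const_mul_left, covariance_const_mul_right,
    (hind.indepFun hji.symm).covariance_eq_zero (hX i) (hX j), mul_zero, mul_zero]

lemma iIndepFun.indepFun_fun_sum_mul_of_sum_mul_variance_eq_zero (hind : iIndepFun X μ)
    (hX : ∀ i, HasGaussianLaw (X i) μ) {a b : ι → ℝ}
    (hab : ∑ i, a i * b i * Var[X i; μ] = 0) :
    IndepFun (fun ω ↦ ∑ i, a i * X i ω) (fun ω ↦ ∑ i, b i * X i ω) μ := by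
  let L : (ι → ℝ) →L[ℝ] ℝ × ℝ :=
    (∑ i, a i • ContinuousLinearMap.proj i).prod (∑ i, b i • ContinuousLinearMap.proj i)
  have hL : HasGaussianLaw (fun ω ↦ (∑ i, a i * X i ω, ∑ i, b i * X i ω)) μ := by
    simpa [L] using (hind.hasGaussianLaw hX).map_fun L
  refine hL.indepFun_of_covariance_eq_zero ?_
  rwa [hind.covariance_fun_sum_mul_fun_sum fun i ↦ (hX i).memLp_two]

end ProbabilityTheory

theorem stmt15_general
    {Ω : Type*} [MeasurableSpace Ω] {μ : Measure Ω}
    (n : ℕ)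
    (v vΦ : ℝ≥0)
    (N Φ : Fin n → Ω → ℝ)
    (hNmeas : ∀ i, Measurable (N i)) (hΦmeas : ∀ i, Measurable (Φ i))
    (hNlaw : ∀ i, μ.map (N i) = gaussianReal 0 v)
    (hΦlaw : ∀ i, μ.map (Φ i) = gaussianReal 0 vΦ)
    (hindep : iIndepFun (Sum.elim N Φ) μ)
    (α : ℝ) (hα : α = (v : ℝ) / ((v : ℝ) + (vΦ : ℝ)))
    (i0 : Fin n)
    (A : Fin n → Ω → ℝ) (hA : A = fun i ω => N i ω + Φ i ω)
    (D1 : Ω → ℝ) (hD1 : D1 = fun ω => ((α - 1) * N i0 ω + α * Φ i0 ω) ^ 2)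
    (c : Fin n → ℝ) :
    ∫ ω, (∑ i, c i * A i ω) ^ 2 * D1 ω ∂μ
      = (∫ ω, (∑ i, c i * A i ω) ^ 2 ∂μ) * ∫ ω, D1 ω ∂μ := by
  subst hA hD1
  have hlaw : ∀ k, HasLaw (Sum.elim N Φ k)
      (gaussianReal 0 (Sum.elim (fun _ ↦ v) (fun _ ↦ vΦ) k)) μ := by
    rintro (i | i)
    exacts [⟨(hNmeas i).aemeasurable, hNlaw i⟩, ⟨(hΦmeas i).aemeasurable, hΦlaw i⟩]
  have hvar : ∀ k, Var[Sum.elim N Φ k; μ] = Sum.elim (fun _ ↦ v) (fun _ ↦ vΦ) k := fun k ↦ by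
    rw [(hlaw k).variance_eq, variance_id_gaussianReal]
  have hab : (α - 1) * v + α * vΦ = 0 := by
    have : α * (v + vΦ) = v := by
      rw [hα, div_mul_cancel_of_imp]
      intro h
      linarith [v.2, vΦ.2]
    linear_combination this
  have hcov : ∑ k, Sum.elim c c k * Sum.elim (Pi.single i0 (α - 1)) (Pi.single i0 α) k
      * Var[Sum.elim N Φ k; μ] = 0 := by
    simp only [hvar, Fintype.sum_sum_type, Sum.elim_inl, Sum.elim_inr, Pi.single_apply, mul_ite,
      mul_zero, ite_mul, zero_mul, Finset.sum_ite_eq', Finset.mem_univ, ↓reduceIte]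
    linear_combination c i0 * hab
  have hSB : IndepFun (fun ω ↦ ∑ i, c i * (N i ω + Φ i ω))
      (fun ω ↦ (α - 1) * N i0 ω + α * Φ i0 ω) μ := by
    convert hindep.indepFun_fun_sum_mul_of_sum_mul_variance_eq_zero
      (fun k ↦ (hlaw k).hasGaussianLaw) hcov using 2 with ω ω
    · simp [Fintype.sum_sum_type, mul_add, Finset.sum_add_distrib]
    · simp [Fintype.sum_sum_type, Pi.single_apply]
  refine (hSB.comp (measurable_id.pow_const 2) (measurable_id.pow_const 2))
    |>.integral_fun_mul_eq_mul_integral ?_ ?_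
  all_goals fun_prop

/-- Decorrelation identity: with i.i.d. `N_i ~ N(0,σ²)`,
`Φ_i ~ N(0,σ_Φ²)` all mutually independent, `α = σ²/(σ² + σ_Φ²)`, `A_i = N_i + Φ_i`,
`B₁ = (α−1)N₁ + αΦ₁` and `D₁ = B₁²`, for all real coefficients `c_i` one has
`E[(Σ c_i A_i)²·D₁] = E[(Σ c_i A_i)²]·E[D₁]`. -/
theorem stmt15
    {Ω : Type*} [MeasurableSpace Ω] {μ : Measure Ω} [IsProbabilityMeasure μ]
    (n : ℕ) (hn : 0 < n)
    (v vΦ : ℝ≥0) (hv : 0 < v) (hvΦ : 0 < vΦ)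
    (N Φ : Fin n → Ω → ℝ)
    (hNmeas : ∀ i, Measurable (N i)) (hΦmeas : ∀ i, Measurable (Φ i))
    (hNlaw : ∀ i, μ.map (N i) = gaussianReal 0 v)
    (hΦlaw : ∀ i, μ.map (Φ i) = gaussianReal 0 vΦ)
    (hindep : iIndepFun (Sum.elim N Φ) μ)
    (α : ℝ) (hα : α = (v : ℝ) / ((v : ℝ) + (vΦ : ℝ)))
    (i0 : Fin n) (hi0 : i0 = ⟨0, hn⟩)
    (A : Fin n → Ω → ℝ) (hA : A = fun i ω => N i ω + Φ i ω)
    (D1 : Ω → ℝ) (hD1 : D1 = fun ω => ((α - 1) * N i0 ω + α * Φ i0 ω) ^ 2)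
    (c : Fin n → ℝ) :
    ∫ ω, (∑ i, c i * A i ω) ^ 2 * D1 ω ∂μ
      = (∫ ω, (∑ i, c i * A i ω) ^ 2 ∂μ) * ∫ ω, D1 ω ∂μ :=
  stmt15_general n v vΦ N Φ hNmeas hΦmeas hNlaw hΦlaw hindep α hα i0 A hA D1 hD1 c
end

section
/- Fix 1 ≤ k ≤ n and a design matrix Y* ∈ ℝ^{k×n} with Y*(Y*)ᵀ invertible. Let N, Φ ∈ ℝⁿ be independent random vectors with i.i.d. N(0, σ²) and i.i.d. N(0, σ_Φ²) entries respectively, set α = σ²/(σ² + σ_Φ²), and let β̂ be the OLS estimator on the coded data, so that β̂ − β = (Y*(Y*)ᵀ)⁻¹ Y* (N + Φ). Let Σ̃ be any k×k symmetric positive semidefinite matrix, and define the generalization error G = σ² + (β̂ − β)ᵀ Σ̃ (β̂ − β) and the distortion of the first sample D₁ = ((α − 1)N_1 + αΦ_1)². Then Cov(G, D₁) = 0, i.e., E[G · D₁] = E[G] · E[D₁]. -/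
/-!
Write `S = N + Φ` for the coded noise and `T = (α - 1) N₁ + α Φ₁`, so that
`β̂ - β = (Y*(Y*)ᵀ)⁻¹ Y* S`, `G` is a function of `S` and `D₁ = T²`. The pair `(S, T)` is a
linear image of the independent Gaussian family `(N, Φ)`, hence jointly Gaussian, and it is
uncorrelated: `Cov(S₁, T) = (α - 1) σ² + α σ_Φ² = 0` by the choice of `α`, while `S_i` for
`i ≠ 1` involves only noise independent of `T`. Uncorrelated jointly Gaussian variables are
independent, so `G` and `D₁` are independent and their expectations factor.
-/

open MeasureTheory ProbabilityTheory Matrix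
open scoped NNReal

namespace ProbabilityTheory

variable {Ω : Type*} [MeasurableSpace Ω] {μ : Measure Ω}

lemma iIndepFun.covariance_eq_ite {ι : Type*} [DecidableEq ι] {W : ι → Ω → ℝ}
    (h : iIndepFun W μ) (hW : ∀ i, MemLp (W i) 2 μ) (i j : ι) :
    cov[W i, W j; μ] = if i = j then Var[W i; μ] else 0 := by
  split_ifs with hij
  · subst hij
    exact covariance_self (hW i).aemeasurable
  · exact (h.indepFun hij).covariance_eq_zero (hW i) (hW j)

lemma HasGaussianLaw.indepFun_pi_of_covariance_eval {ι : Type*} [Finite ι]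
    {X : ι → Ω → ℝ} {Y : Ω → ℝ} (hXY : HasGaussianLaw (fun ω ↦ (fun i ↦ X i ω, Y ω)) μ)
    (h : ∀ i, cov[X i, Y; μ] = 0) :
    IndepFun (fun ω i ↦ X i ω) Y μ := by
  have := Fintype.ofFinite ι
  have hXY' := hXY.map_fun (E := (ι → ℝ) × ℝ) (F := (ι → ℝ) × (Unit → ℝ))
    ((ContinuousLinearMap.id ℝ (ι → ℝ)).prodMap (ContinuousLinearMap.pi fun _ ↦ .id ℝ ℝ))
  exact (hXY'.indepFun_of_covariance_eval (X := X) (Y := fun _ ↦ Y) fun i _ ↦ h i).comp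
    measurable_id (measurable_pi_apply ())

section SumElim

variable {n : ℕ} {N Φ : Fin n → Ω → ℝ}

lemma covariance_sumElim_add_eq_ite [IsFiniteMeasure μ] (hindep : iIndepFun (Sum.elim N Φ) μ)
    (hN : ∀ i, MemLp (N i) 2 μ) (hΦ : ∀ i, MemLp (Φ i) 2 μ) (i j : Fin n) (a b : ℝ) :
    cov[fun ω ↦ N i ω + Φ i ω, fun ω ↦ a * N j ω + b * Φ j ω; μ]
      = if i = j then a * Var[N i; μ] + b * Var[Φ i; μ] else 0 := by
  have hW : ∀ k, MemLp (Sum.elim N Φ k) 2 μ := Sum.rec hN hΦ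
  have hcov := hindep.covariance_eq_ite hW
  change cov[Sum.elim N Φ (.inl i) + Sum.elim N Φ (.inr i),
    (fun ω ↦ a * Sum.elim N Φ (.inl j) ω) + (fun ω ↦ b * Sum.elim N Φ (.inr j) ω); μ] = _
  rw [covariance_add_left (hW _) (hW _) (((hW _).const_mul a).add ((hW _).const_mul b)),
    covariance_add_right (hW _) ((hW _).const_mul a) ((hW _).const_mul b),
    covariance_add_right (hW _) ((hW _).const_mul a) ((hW _).const_mul b),
    covariance_const_mul_right, covariance_const_mul_right, covariance_const_mul_right,
    covariance_const_mul_right, hcov, hcov, hcov, hcov]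
  split_ifs <;> simp_all

lemma indepFun_sumElim_add_of_gaussianReal [IsProbabilityMeasure μ] {v vΦ : ℝ≥0}
    (hN : ∀ i, HasLaw (N i) (gaussianReal 0 v) μ) (hΦ : ∀ i, HasLaw (Φ i) (gaussianReal 0 vΦ) μ)
    (hindep : iIndepFun (Sum.elim N Φ) μ) (i₀ : Fin n) {a b : ℝ} (hab : a * v + b * vΦ = 0) :
    IndepFun (fun ω i ↦ N i ω + Φ i ω) (fun ω ↦ a * N i₀ ω + b * Φ i₀ ω) μ := by
  have hW : HasGaussianLaw (fun ω k ↦ Sum.elim N Φ k ω) μ :=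
    hindep.hasGaussianLaw (Sum.rec (fun i ↦ (hN i).hasGaussianLaw) fun i ↦ (hΦ i).hasGaussianLaw)
  have hST := hW.map_fun (F := (Fin n → ℝ) × ℝ)
    ((ContinuousLinearMap.pi fun i ↦ .proj (.inl i) + .proj (.inr i)).prod
      (a • .proj (.inl i₀) + b • .proj (.inr i₀)))
  refine HasGaussianLaw.indepFun_pi_of_covariance_eval hST fun i ↦ ?_
  rw [covariance_sumElim_add_eq_ite hindep (fun i ↦ (hN i).hasGaussianLaw.memLp_two)
    (fun i ↦ (hΦ i).hasGaussianLaw.memLp_two), (hN i).variance_eq, (hΦ i).variance_eq,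
    variance_id_gaussianReal, variance_id_gaussianReal, hab, ite_self]

end SumElim

end ProbabilityTheory

theorem stmt16_general
    {Ω : Type*} [MeasurableSpace Ω] {μ : Measure Ω} [IsProbabilityMeasure μ]
    (k n : ℕ)
    (Ystar : Matrix (Fin k) (Fin n) ℝ)
    (v vΦ : ℝ≥0)
    (N Φ : Fin n → Ω → ℝ)
    (hNmeas : ∀ i, Measurable (N i)) (hΦmeas : ∀ i, Measurable (Φ i))
    (hNlaw : ∀ i, μ.map (N i) = gaussianReal 0 v)
    (hΦlaw : ∀ i, μ.map (Φ i) = gaussianReal 0 vΦ)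
    (hindep : iIndepFun (Sum.elim N Φ) μ)
    (α : ℝ) (hα : α = (v : ℝ) / ((v : ℝ) + (vΦ : ℝ)))
    (β : Fin k → ℝ) (betaHat : Ω → Fin k → ℝ)
    (hbetaHat : ∀ ω, betaHat ω - β
      = ((Ystar * Ystarᵀ)⁻¹ * Ystar).mulVec (fun i => N i ω + Φ i ω))
    (Sigt : Matrix (Fin k) (Fin k) ℝ)
    (G : Ω → ℝ)
    (hG : G = fun ω => (v : ℝ) + (betaHat ω - β) ⬝ᵥ Sigt.mulVec (betaHat ω - β))
    (i0 : Fin n)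
    (D1 : Ω → ℝ) (hD1 : D1 = fun ω => ((α - 1) * N i0 ω + α * Φ i0 ω) ^ 2) :
    ∫ ω, G ω * D1 ω ∂μ = (∫ ω, G ω ∂μ) * ∫ ω, D1 ω ∂μ := by
  have hα' : (α - 1) * v + α * vΦ = 0 := by
    have : α * (v + vΦ) = v := hα ▸ div_mul_cancel_of_imp fun h ↦ by
      linarith [v.coe_nonneg, vΦ.coe_nonneg]
    linear_combination this
  set M := (Ystar * Ystarᵀ)⁻¹ * Ystar
  set g : (Fin n → ℝ) → ℝ := fun s ↦ (v : ℝ) + (M *ᵥ s) ⬝ᵥ Sigt *ᵥ (M *ᵥ s)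
  have hg : Measurable g := by fun_prop
  have hS : Measurable fun ω i ↦ N i ω + Φ i ω :=
    measurable_pi_lambda _ fun i ↦ (hNmeas i).add (hΦmeas i)
  have hGS : G = fun ω ↦ g fun i ↦ N i ω + Φ i ω := by
    simp only [hG, hbetaHat, g]
  have hGD := (indepFun_sumElim_add_of_gaussianReal (fun i ↦ ⟨(hNmeas i).aemeasurable, hNlaw i⟩)
    (fun i ↦ ⟨(hΦmeas i).aemeasurable, hΦlaw i⟩) hindep i0 hα').comp
    (ψ := fun t ↦ t ^ 2) hg (by fun_prop)
  rw [hGS, hD1]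
  exact hGD.integral_fun_mul_eq_mul_integral (hg.comp hS).aestronglyMeasurable (by fun_prop)

/-- Parametric case of the finite-length no-trade-off result: with
Gaussian noises `N_i ~ N(0,σ²)`, `Φ_i ~ N(0,σ_Φ²)` all mutually independent,
`α = σ²/(σ² + σ_Φ²)`, OLS error `β̂ − β = (Y*(Y*)ᵀ)⁻¹Y*(N + Φ)`, any symmetric PSD `Σ̃`,
generalization error `G = σ² + (β̂−β)ᵀΣ̃(β̂−β)` and first-sample distortion
`D₁ = ((α−1)N₁ + αΦ₁)²`, one has `Cov(G, D₁) = 0`, i.e. `E[G·D₁] = E[G]·E[D₁]`. -/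
theorem stmt16
    {Ω : Type*} [MeasurableSpace Ω] {μ : Measure Ω} [IsProbabilityMeasure μ]
    (k n : ℕ) (hk : 1 ≤ k) (hkn : k ≤ n)
    (Ystar : Matrix (Fin k) (Fin n) ℝ)
    (hinv : IsUnit (Ystar * Ystarᵀ).det)
    (v vΦ : ℝ≥0) (hv : 0 < v) (hvΦ : 0 < vΦ)
    (N Φ : Fin n → Ω → ℝ)
    (hNmeas : ∀ i, Measurable (N i)) (hΦmeas : ∀ i, Measurable (Φ i))
    (hNlaw : ∀ i, μ.map (N i) = gaussianReal 0 v)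
    (hΦlaw : ∀ i, μ.map (Φ i) = gaussianReal 0 vΦ)
    (hindep : iIndepFun (Sum.elim N Φ) μ)
    (α : ℝ) (hα : α = (v : ℝ) / ((v : ℝ) + (vΦ : ℝ)))
    (β : Fin k → ℝ) (betaHat : Ω → Fin k → ℝ)
    (hbetaHat : ∀ ω, betaHat ω - β
      = ((Ystar * Ystarᵀ)⁻¹ * Ystar).mulVec (fun i => N i ω + Φ i ω))
    (Sigt : Matrix (Fin k) (Fin k) ℝ) (hSymm : Sigt.IsSymm) (hPSD : Sigt.PosSemidef)
    (G : Ω → ℝ)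
    (hG : G = fun ω => (v : ℝ) + (betaHat ω - β) ⬝ᵥ Sigt.mulVec (betaHat ω - β))
    (hn : 0 < n) (i0 : Fin n) (hi0 : i0 = ⟨0, hn⟩)
    (D1 : Ω → ℝ) (hD1 : D1 = fun ω => ((α - 1) * N i0 ω + α * Φ i0 ω) ^ 2) :
    ∫ ω, G ω * D1 ω ∂μ = (∫ ω, G ω ∂μ) * ∫ ω, D1 ω ∂μ :=
  stmt16_general k n Ystar v vΦ N Φ hNmeas hΦmeas hNlaw hΦlaw hindep α hα β betaHat hbetaHat Sigt G
    hG i0 D1 hD1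
end

section
/- Let Y_1, …, Y_n be i.i.d. with a density p supported on a compact interval, and let N_1, …, N_n ~ N(0, σ²) and Φ_1, …, Φ_n ~ N(0, σ_Φ²) be i.i.d., all three families mutually independent. Set α = σ²/(σ² + σ_Φ²) and V_i = f(Y_i) + N_i + Φ_i for a bounded measurable f. Let K be a strictly positive kernel, h > 0, and let f̂(y) = (Σ_i K((y − Y_i)/h) V_i)/(Σ_i K((y − Y_i)/h)) be the Nadaraya–Watson estimator. Define the generalization error G = σ² + ∫ (f̂(y) − f(y))² p(y) dy and the distortion of the first sample D₁ = ((α − 1)N_1 + αΦ_1)². Then, provided the moments exist, Cov(G, D₁) = 0. -/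
open MeasureTheory ProbabilityTheory
open scoped NNReal

/-!
`G` depends on `ω` only through the covariates `Y i` and the total noises `N i + Φ i`, while
`D₁` is the square of `(α - 1) N i₀ + α Φ i₀ = α (N i₀ + Φ i₀) - N i₀`, the error of the MMSE
estimate of `N i₀` from `N i₀ + Φ i₀`. That error and the observation `N i₀ + Φ i₀` are jointly
Gaussian and, for `α = σ² / (σ² + σ_Φ²)`, uncorrelated, hence independent; all other coordinates
of the data are independent of both. So `G` and `D₁` are independent and `E[G D₁] = E[G] E[D₁]`.
-/

noncomputable def nadarayaWatson {ι : Type*} [Fintype ι] (K : ℝ → ℝ) (h : ℝ) (y V : ι → ℝ)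
    (t : ℝ) : ℝ :=
  (∑ i, K ((t - y i) / h) * V i) / ∑ i, K ((t - y i) / h)

lemma measurable_integral_nadarayaWatson_sub_sq {ι : Type*} [Fintype ι] {K f p : ℝ → ℝ}
    (hK : Measurable K) (hf : Measurable f) (hp : Measurable p) (h : ℝ) :
    Measurable fun z : (ι → ℝ) × (ι → ℝ) =>
      ∫ t, (nadarayaWatson K h z.1 z.2 t - f t) ^ 2 * p t := by
  have hK' (i : ι) : Measurable fun q : ((ι → ℝ) × (ι → ℝ)) × ℝ => K ((q.2 - q.1.1 i) / h) :=
    hK.comp (by fun_prop)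
  have hintegrand : Measurable fun q : ((ι → ℝ) × (ι → ℝ)) × ℝ =>
      (nadarayaWatson K h q.1.1 q.1.2 q.2 - f q.2) ^ 2 * p q.2 :=
    ((((Finset.measurable_sum _ fun i _ => (hK' i).mul (by fun_prop)).div
      (Finset.measurable_sum _ fun i _ => hK' i)).sub (hf.comp measurable_snd)).pow_const 2).mul
      (hp.comp measurable_snd)
  exact hintegrand.stronglyMeasurable.integral_prod_right'.measurable

namespace ProbabilityTheory

variable {Ω : Type*} [MeasurableSpace Ω] {P : Measure Ω}

lemma IndepFun.prodMk_left_of_indepFun_prodMk [IsFiniteMeasure P]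
    {α β γ : Type*} [MeasurableSpace α] [MeasurableSpace β] [MeasurableSpace γ]
    {X : Ω → α} {S : Ω → β} {W : Ω → γ}
    (hX : Measurable X) (hS : Measurable S) (hW : Measurable W)
    (hXSW : IndepFun X (fun ω => (S ω, W ω)) P) (hSW : IndepFun S W P) :
    IndepFun (fun ω => (X ω, S ω)) W P := by
  have hXS : IndepFun X S P := hXSW.comp measurable_id measurable_fst
  have hassoc : (fun ω => ((X ω, S ω), W ω))
      = MeasurableEquiv.prodAssoc.symm ∘ fun ω => (X ω, (S ω, W ω)) := rfl
  rw [indepFun_iff_map_prod_eq_prod_map_map (hX.prodMk hS).aemeasurable hW.aemeasurable,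
    (indepFun_iff_map_prod_eq_prod_map_map hX.aemeasurable hS.aemeasurable).1 hXS, hassoc,
    ← Measure.map_map MeasurableEquiv.prodAssoc.symm.measurable (hX.prodMk (hS.prodMk hW)),
    (indepFun_iff_map_prod_eq_prod_map_map hX.aemeasurable (hS.prodMk hW).aemeasurable).1 hXSW,
    (indepFun_iff_map_prod_eq_prod_map_map hS.aemeasurable hW.aemeasurable).1 hSW,
    ← Measure.prodAssoc_prod, MeasurableEquiv.map_symm_map]

lemma iIndepFun.indepFun_indicator_compl {ι β : Type*} [Fintype ι] [Zero β] [MeasurableSpace β]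
    {g : ι → Ω → β} (hg : iIndepFun g P) (hmeas : ∀ i, Measurable (g i)) (T : Finset ι) :
    IndepFun (fun ω => (↑T : Set ι)ᶜ.indicator (g · ω))
      (fun ω => (↑T : Set ι).indicator (g · ω)) P := by
  classical
  let extend (s : Finset ι) (x : s → β) (i : ι) : β := if h : i ∈ s then x ⟨i, h⟩ else 0
  have hextend (s : Finset ι) : Measurable (extend s) := by
    refine measurable_pi_lambda _ fun i => ?_
    by_cases h : i ∈ s
    · simpa [extend, h] using measurable_pi_apply (⟨i, h⟩ : s)
    · simp [extend, h]
  convert (hg.indepFun_finset Tᶜ T disjoint_compl_left hmeas).comp (hextend _) (hextend _)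
    using 1 <;> ext ω i <;> by_cases h : i ∈ T <;> simp [extend, h]

lemma indepFun_add_mmseError_of_gaussianReal [IsProbabilityMeasure P] {N Φ : Ω → ℝ}
    {m m' : ℝ} {v w : ℝ≥0} (hN : HasLaw N (gaussianReal m v) P)
    (hΦ : HasLaw Φ (gaussianReal m' w) P) (hNΦ : IndepFun N Φ P) {α : ℝ}
    (hα : α = v / (v + w)) :
    IndepFun (fun ω => N ω + Φ ω) (fun ω => (α - 1) * N ω + α * Φ ω) P := by
  have hjoint : HasGaussianLaw (fun ω => (N ω, Φ ω)) P :=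
    hNΦ.hasGaussianLaw hN.hasGaussianLaw hΦ.hasGaussianLaw
  let L : ℝ × ℝ →L[ℝ] ℝ × ℝ :=
    (ContinuousLinearMap.fst ℝ ℝ ℝ + ContinuousLinearMap.snd ℝ ℝ ℝ).prod
      ((α - 1) • ContinuousLinearMap.fst ℝ ℝ ℝ + α • ContinuousLinearMap.snd ℝ ℝ ℝ)
  have hmix : HasGaussianLaw (fun ω => (N ω + Φ ω, (α - 1) * N ω + α * Φ ω)) P := by
    simpa [L] using hjoint.map_fun L
  refine hmix.indepFun_of_covariance_eq_zero ?_
  have hN2 : MemLp N 2 P := hN.hasGaussianLaw.memLp_two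
  have hΦ2 : MemLp Φ 2 P := hΦ.hasGaussianLaw.memLp_two
  have hcov : cov[N, Φ; P] = 0 := hNΦ.covariance_eq_zero hN2 hΦ2
  have hvar : cov[N, N; P] = v ∧ cov[Φ, Φ; P] = w := by
    rw [covariance_self hN.aemeasurable, covariance_self hΦ.aemeasurable, hN.variance_eq,
      hΦ.variance_eq, variance_id_gaussianReal, variance_id_gaussianReal]
    exact ⟨rfl, rfl⟩
  calc cov[N + Φ, (fun ω => (α - 1) * N ω) + (fun ω => α * Φ ω); P]
      = (α - 1) * cov[N, N; P] + α * cov[N, Φ; P]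
        + ((α - 1) * cov[N, Φ; P] + α * cov[Φ, Φ; P]) := by
        rw [covariance_add_left hN2 hΦ2 ((hN2.const_mul _).add (hΦ2.const_mul _)),
          covariance_add_right hN2 (hN2.const_mul _) (hΦ2.const_mul _),
          covariance_add_right hΦ2 (hN2.const_mul _) (hΦ2.const_mul _),
          covariance_const_mul_right, covariance_const_mul_right, covariance_const_mul_right,
          covariance_const_mul_right, covariance_comm Φ N]
    _ = 0 := by
        rw [hcov, hvar.1, hvar.2, hα]
        rcases eq_or_ne ((v : ℝ) + w) 0 with hvw | hvw
        -- `v = w = 0`, and `α = 0` by the convention `x / 0 = 0`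
        · have hv : (v : ℝ) = 0 := by linarith [v.coe_nonneg, w.coe_nonneg]
          have hw : (w : ℝ) = 0 := by linarith [v.coe_nonneg, w.coe_nonneg]
          simp [hv, hw]
        · field_simp
          ring

end ProbabilityTheory

lemma indepFun_covariates_noiseSum_mmseError {Ω ι : Type*} [MeasurableSpace Ω] {P : Measure Ω}
    [IsProbabilityMeasure P] [Fintype ι] [DecidableEq ι] {Y N Φ : ι → Ω → ℝ}
    (hY : ∀ i, Measurable (Y i)) (hN : ∀ i, Measurable (N i)) (hΦ : ∀ i, Measurable (Φ i))
    (hindep : iIndepFun (Sum.elim Y (Sum.elim N Φ)) P) (i₀ : ι) {m m' : ℝ} {v w : ℝ≥0}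
    (hNlaw : P.map (N i₀) = gaussianReal m v) (hΦlaw : P.map (Φ i₀) = gaussianReal m' w)
    {α : ℝ} (hα : α = v / (v + w)) :
    IndepFun (fun ω => (fun i => Y i ω, fun i => N i ω + Φ i ω))
      (fun ω => (α - 1) * N i₀ ω + α * Φ i₀ ω) P := by
  set g := Sum.elim Y (Sum.elim N Φ)
  have hg : ∀ j, Measurable (g j) := by
    rintro (i | i | i)
    exacts [hY i, hN i, hΦ i]
  set T : Finset (ι ⊕ ι ⊕ ι) := {.inr (.inl i₀), .inr (.inr i₀)}
  set X := fun ω => (↑T : Set (ι ⊕ ι ⊕ ι))ᶜ.indicator (g · ω)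
  set S := fun ω => N i₀ ω + Φ i₀ ω
  set W := fun ω => (α - 1) * N i₀ ω + α * Φ i₀ ω
  have hX : Measurable X := measurable_pi_lambda _ fun j => by
    by_cases hj : j ∈ (↑T : Set (ι ⊕ ι ⊕ ι))ᶜ <;> simp [X, hj, hg j]
  have hSW_eq : (fun ω => (S ω, W ω)) = (fun z : ι ⊕ ι ⊕ ι → ℝ =>
      (z (.inr (.inl i₀)) + z (.inr (.inr i₀)),
        (α - 1) * z (.inr (.inl i₀)) + α * z (.inr (.inr i₀))))
      ∘ fun ω => (↑T : Set (ι ⊕ ι ⊕ ι)).indicator (g · ω) := by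
    ext ω <;> simp [T, g, S, W]
  have hXSW : IndepFun X (fun ω => (S ω, W ω)) P := by
    rw [hSW_eq]
    exact (hindep.indepFun_indicator_compl hg T).comp measurable_id (by fun_prop)
  have hSW : IndepFun S W P :=
    indepFun_add_mmseError_of_gaussianReal ⟨(hN i₀).aemeasurable, hNlaw⟩
      ⟨(hΦ i₀).aemeasurable, hΦlaw⟩
      (hindep.indepFun (i := .inr (.inl i₀)) (j := .inr (.inr i₀)) (by simp)) hα
  have hdata_eq : (fun ω => (fun i => Y i ω, fun i => N i ω + Φ i ω))
      = (fun q : (ι ⊕ ι ⊕ ι → ℝ) × ℝ => (fun i => q.1 (.inl i),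
          fun i => q.1 (.inr (.inl i)) + q.1 (.inr (.inr i)) + if i = i₀ then q.2 else 0))
        ∘ fun ω => (X ω, S ω) := by
    ext ω i
    · simp [X, T, g]
    · by_cases hi : i = i₀ <;> simp [X, T, g, S, hi]
  rw [hdata_eq]
  refine (IndepFun.prodMk_left_of_indepFun_prodMk hX (by fun_prop) (by fun_prop) hXSW hSW).comp
    ?_ measurable_id
  refine (measurable_pi_lambda _ fun i => ?_).prodMk (measurable_pi_lambda _ fun i => ?_)
  · fun_prop
  · by_cases hi : i = i₀ <;> simp only [hi, if_true, if_false] <;> fun_prop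

theorem stmt17_general
    {Ω : Type*} [MeasurableSpace Ω] {μ : Measure Ω} [IsProbabilityMeasure μ]
    (n : ℕ)
    (p : ℝ → ℝ) (hpmeas : Measurable p)
    (v vΦ : ℝ≥0)
    (Y N Φ : Fin n → Ω → ℝ)
    (hYmeas : ∀ i, Measurable (Y i))
    (hNmeas : ∀ i, Measurable (N i)) (hΦmeas : ∀ i, Measurable (Φ i))
    (hNlaw : ∀ i, μ.map (N i) = gaussianReal 0 v)
    (hΦlaw : ∀ i, μ.map (Φ i) = gaussianReal 0 vΦ)
    (hindep : iIndepFun (Sum.elim Y (Sum.elim N Φ)) μ)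
    (α : ℝ) (hα : α = (v : ℝ) / ((v : ℝ) + (vΦ : ℝ)))
    (f : ℝ → ℝ) (hfmeas : Measurable f)
    (K : ℝ → ℝ) (hKmeas : Measurable K)
    (h : ℝ)
    (fhat : Ω → ℝ → ℝ)
    (hfhat : ∀ ω y, fhat ω y =
      (∑ i, K ((y - Y i ω) / h) * (f (Y i ω) + N i ω + Φ i ω))
        / (∑ i, K ((y - Y i ω) / h)))
    (G : Ω → ℝ) (hG : G = fun ω => (v : ℝ) + ∫ y, (fhat ω y - f y) ^ 2 * p y)
    (i0 : Fin n)
    (D1 : Ω → ℝ) (hD1 : D1 = fun ω => ((α - 1) * N i0 ω + α * Φ i0 ω) ^ 2) :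
    ∫ ω, G ω * D1 ω ∂μ = (∫ ω, G ω ∂μ) * ∫ ω, D1 ω ∂μ := by
  have hdata := indepFun_covariates_noiseSum_mmseError hYmeas hNmeas hΦmeas hindep i0
    (hNlaw i0) (hΦlaw i0) hα
  set risk := fun z : (Fin n → ℝ) × (Fin n → ℝ) =>
    (v : ℝ) + ∫ t, (nadarayaWatson K h z.1 (fun i => f (z.1 i) + z.2 i) t - f t) ^ 2 * p t
  have hrisk : Measurable risk :=
    ((measurable_integral_nadarayaWatson_sub_sq hKmeas hfmeas hpmeas h).comp
      (measurable_fst.prodMk (measurable_pi_lambda _ fun i =>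
        (hfmeas.comp ((measurable_pi_apply i).comp measurable_fst)).add
          ((measurable_pi_apply i).comp measurable_snd)))).const_add _
  have hG_eq : G = risk ∘ fun ω => (fun i => Y i ω, fun i => N i ω + Φ i ω) := by
    subst hG
    funext ω
    simp only [Function.comp_apply, risk, nadarayaWatson, hfhat, add_assoc]
  have hGD1 : IndepFun G D1 μ := by
    rw [hG_eq, hD1]
    exact hdata.comp hrisk (measurable_id.pow_const 2)
  exact hGD1.integral_fun_mul_eq_mul_integral
    (hG_eq ▸ hrisk.comp (by fun_prop)).aestronglyMeasurable
    (hD1 ▸ by fun_prop : Measurable D1).aestronglyMeasurable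

/-- Kernel case of the finite-length no-trade-off result: with i.i.d.
covariates `Y_i` of density `p` supported on a compact interval, mutually independent
Gaussian noises `N_i ~ N(0,σ²)`, `Φ_i ~ N(0,σ_Φ²)`, `α = σ²/(σ² + σ_Φ²)`, responses
`V_i = f(Y_i) + N_i + Φ_i`, Nadaraya–Watson estimator `f̂`, generalization error
`G = σ² + ∫(f̂(y) − f(y))²p(y)dy` and first-sample distortion
`D₁ = ((α−1)N₁ + αΦ₁)²`, provided the moments exist, `Cov(G, D₁) = 0`. -/
theorem stmt17
    {Ω : Type*} [MeasurableSpace Ω] {μ : Measure Ω} [IsProbabilityMeasure μ]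
    (n : ℕ) (hn : 0 < n)
    (a b : ℝ) (hab : a < b)
    (p : ℝ → ℝ) (hpnn : ∀ t, 0 ≤ p t) (hpmeas : Measurable p) (hp1 : ∫ t, p t = 1)
    (hpsupp : ∀ t ∉ Set.Icc a b, p t = 0)
    (v vΦ : ℝ≥0) (hv : 0 < v) (hvΦ : 0 < vΦ)
    (Y N Φ : Fin n → Ω → ℝ)
    (hYmeas : ∀ i, Measurable (Y i))
    (hNmeas : ∀ i, Measurable (N i)) (hΦmeas : ∀ i, Measurable (Φ i))
    (hYlaw : ∀ i, μ.map (Y i) = volume.withDensity (fun t => ENNReal.ofReal (p t)))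
    (hNlaw : ∀ i, μ.map (N i) = gaussianReal 0 v)
    (hΦlaw : ∀ i, μ.map (Φ i) = gaussianReal 0 vΦ)
    (hindep : iIndepFun (Sum.elim Y (Sum.elim N Φ)) μ)
    (α : ℝ) (hα : α = (v : ℝ) / ((v : ℝ) + (vΦ : ℝ)))
    (f : ℝ → ℝ) (hfmeas : Measurable f) (Mf : ℝ) (hfbd : ∀ x, |f x| ≤ Mf)
    (K : ℝ → ℝ) (hKpos : ∀ u, 0 < K u) (hKmeas : Measurable K)
    (h : ℝ) (hh : 0 < h)
    (fhat : Ω → ℝ → ℝ)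
    (hfhat : ∀ ω y, fhat ω y =
      (∑ i, K ((y - Y i ω) / h) * (f (Y i ω) + N i ω + Φ i ω))
        / (∑ i, K ((y - Y i ω) / h)))
    (G : Ω → ℝ) (hG : G = fun ω => (v : ℝ) + ∫ y, (fhat ω y - f y) ^ 2 * p y)
    (i0 : Fin n) (hi0 : i0 = ⟨0, hn⟩)
    (D1 : Ω → ℝ) (hD1 : D1 = fun ω => ((α - 1) * N i0 ω + α * Φ i0 ω) ^ 2)
    (hGint : Integrable G μ)
    (hGD1int : Integrable (fun ω => G ω * D1 ω) μ) :
    ∫ ω, G ω * D1 ω ∂μ = (∫ ω, G ω ∂μ) * ∫ ω, D1 ω ∂μ :=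
  stmt17_general n p hpmeas v vΦ Y N Φ hYmeas hNmeas hΦmeas hNlaw hΦlaw hindep α hα f hfmeas K
    hKmeas h fhat hfhat G hG i0 D1 hD1
end
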